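/- Explicit second-order formula: ∇[ e(±(z+z̄)/2π)|z|^{−1}H(1/z) ] = e(±(z+z̄)/2π)|z|^{−1} · ( (1/4)H(1/z) + 2(1/z ∓ i)H¹(1/z) + z^{−2}H²(1/z) ), where ∇ = (z∂/∂z)² + z², H¹ = ∂H/∂w, H² = ∂²H/∂w². -/

import Mathlib

open Complex MeasureTheory Real Filter ComplexConjugate

/-- Bessel function of the first kind, defined by its power series. -/
noncomputable def besselJ (ν z : ℂ) : ℂ :=
  ∑' n : ℕ, ((-1 : ℂ) ^ n * (z / 2) ^ (ν + 2 * (n : ℂ))) /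
    ((n.factorial : ℂ) * Complex.Gamma (ν + (n : ℂ) + 1))

/-- The product Bessel function `J_{μ,m}(z) = J_{−μ−m/2}(z) · J_{−μ+m/2}(z̄)`. -/
noncomputable def besselJC (μ : ℂ) (m : ℤ) (z : ℂ) : ℂ :=
  besselJ (-μ - (m : ℂ) / 2) z * besselJ (-μ + (m : ℂ) / 2) (conj z)

/-- The Bessel function `𝕁_{μ,m}` for `SL₂(ℂ)`. -/
noncomputable def JJ (μ : ℂ) (m : ℤ) (z : ℂ) : ℂ :=
  if Even m then
    (besselJC μ m z - besselJC (-μ) (-m) z) / Complex.sin ((Real.pi : ℂ) * μ)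
  else
    (besselJC μ m z + besselJC (-μ) (-m) z) / (Complex.I * Complex.cos ((Real.pi : ℂ) * μ))

/-- The Wirtinger derivative `∂/∂z = (∂/∂x − i ∂/∂y)/2`. -/
noncomputable def wdz (f : ℂ → ℂ) (z : ℂ) : ℂ :=
  (fderiv ℝ f z 1 - Complex.I * fderiv ℝ f z Complex.I) / 2

/-- The conjugate Wirtinger derivative `∂/∂z̄ = (∂/∂x + i ∂/∂y)/2`. -/
noncomputable def wdzbar (f : ℂ → ℂ) (z : ℂ) : ℂ :=
  (fderiv ℝ f z 1 + Complex.I * fderiv ℝ f z Complex.I) / 2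

/-- The operator `∇ = (z ∂/∂z)² + z²`. -/
noncomputable def nabla (f : ℂ → ℂ) (z : ℂ) : ℂ :=
  z * wdz (fun w => w * wdz f w) z + z ^ 2 * f z

/-- The operator `∇̄ = (z̄ ∂/∂z̄)² + z̄²`. -/
noncomputable def nablaBar (f : ℂ → ℂ) (z : ℂ) : ℂ :=
  conj z * wdzbar (fun w => conj w * wdzbar f w) z + (conj z) ^ 2 * f z


section Toolkit

lemma wdz_congr {f g : ℂ → ℂ} {z : ℂ} (h : f =ᶠ[nhds z] g) : wdz f z = wdz g z := by
  unfold wdz; rw [h.fderiv_eq]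

lemma wdz_mul {f g : ℂ → ℂ} {z : ℂ} (hf : DifferentiableAt ℝ f z)
    (hg : DifferentiableAt ℝ g z) :
    wdz (fun w => f w * g w) z = wdz f z * g z + f z * wdz g z := by
  unfold wdz
  rw [fderiv_fun_mul hf hg]
  simp only [ContinuousLinearMap.add_apply, ContinuousLinearMap.smul_apply, smul_eq_mul]
  ring

lemma hasFDerivAt_of_hasDerivAt {g : ℂ → ℂ} {g' z : ℂ} (hg : HasDerivAt g g' z) :
    HasFDerivAt g ((ContinuousLinearMap.smulRight (1 : ℂ →L[ℂ] ℂ) g').restrictScalars ℝ) z :=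
  hg.hasFDerivAt.restrictScalars ℝ

lemma wdz_holo {g : ℂ → ℂ} {g' z : ℂ} (hg : HasDerivAt g g' z) : wdz g z = g' := by
  unfold wdz
  rw [(hasFDerivAt_of_hasDerivAt hg).fderiv]
  simp [Complex.ext_iff]

lemma wdz_comp_outer {g f : ℂ → ℂ} {g' z : ℂ} (hg : HasDerivAt g g' (f z))
    (hf : DifferentiableAt ℝ f z) :
    wdz (fun w => g (f w)) z = g' * wdz f z := by
  unfold wdz
  have h := ((hasFDerivAt_of_hasDerivAt hg).comp z hf.hasFDerivAt).fderiv
  rw [Function.comp_def] at h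
  rw [h]
  simp only [ContinuousLinearMap.coe_comp', Function.comp_apply,
    ContinuousLinearMap.coe_restrictScalars', ContinuousLinearMap.smulRight_apply,
    ContinuousLinearMap.one_apply, smul_eq_mul]
  ring

lemma clm_decompose (D : ℂ →L[ℝ] ℂ) (a : ℂ) : D a = (a.re : ℂ) * D 1 + (a.im : ℂ) * D Complex.I := by
  have h : a = (a.re : ℝ) • (1 : ℂ) + (a.im : ℝ) • (Complex.I) := by
    simp [Complex.real_smul, Complex.re_add_im]
  calc D a = D ((a.re : ℝ) • (1 : ℂ) + (a.im : ℝ) • Complex.I) := by rw [← h]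
    _ = (a.re : ℂ) * D 1 + (a.im : ℂ) * D Complex.I := by
        rw [map_add, _root_.map_smul, _root_.map_smul]
        simp [Complex.real_smul]

lemma wdz_comp_inner {f g : ℂ → ℂ} {g' z : ℂ} (hf : DifferentiableAt ℝ f (g z))
    (hg : HasDerivAt g g' z) :
    wdz (fun w => f (g w)) z = g' * wdz f (g z) := by
  unfold wdz
  have h := (hf.hasFDerivAt.comp z (hasFDerivAt_of_hasDerivAt hg)).fderiv
  rw [Function.comp_def] at h
  rw [h]
  set D := fderiv ℝ f (g z)
  simp only [ContinuousLinearMap.coe_comp', Function.comp_apply,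
    ContinuousLinearMap.coe_restrictScalars', ContinuousLinearMap.smulRight_apply,
    ContinuousLinearMap.one_apply, smul_eq_mul, one_mul]
  rw [clm_decompose D g', clm_decompose D (Complex.I * g')]
  have h1 : (Complex.I * g').re = -g'.im := by simp
  have h2 : (Complex.I * g').im = g'.re := by simp
  rw [h1, h2]
  have := Complex.re_add_im g'
  push_cast
  linear_combination (-(D 1 - Complex.I * D Complex.I)/2) * this.symm + ((g'.im:ℂ) * D Complex.I/2) * Complex.I_sq

lemma wdz_antiholo {f : ℂ → ℂ} {f' z : ℂ} (hf : HasDerivAt f f' (conj z)) :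
    wdz (fun w => f (conj w)) z = 0 := by
  unfold wdz
  have hc : HasFDerivAt (fun w : ℂ => conj w) (Complex.conjCLE.toContinuousLinearMap) z :=
    Complex.conjCLE.toContinuousLinearMap.hasFDerivAt
  have h := ((hasFDerivAt_of_hasDerivAt hf).comp z hc).fderiv
  rw [Function.comp_def] at h
  rw [h]
  simp only [ContinuousLinearMap.coe_comp', Function.comp_apply,
    ContinuousLinearMap.coe_restrictScalars', ContinuousLinearMap.smulRight_apply,
    ContinuousLinearMap.one_apply, smul_eq_mul, ContinuousLinearEquiv.coe_coe,
    Complex.conjCLE_apply, map_one, Complex.conj_I, one_mul]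
  linear_combination (f'/2) * Complex.I_sq

lemma contDiff_wdz {H : ℂ → ℂ} (hH : ContDiff ℝ (⊤ : ℕ∞) H) : ContDiff ℝ (⊤ : ℕ∞) (wdz H) := by
  unfold wdz
  have h : ContDiff ℝ (⊤ : ℕ∞) (fderiv ℝ H) := hH.fderiv_right le_rfl
  exact ((h.clm_apply contDiff_const).sub
    (contDiff_const.mul (h.clm_apply contDiff_const))).div_const 2

lemma hasFDerivAt_absC {z : ℂ} (hz : z ≠ 0) :
    HasFDerivAt (fun w : ℂ => (‖w‖ : ℂ))
      (Complex.ofRealCLM.comp ((1 / (2 * Real.sqrt (Complex.normSq z))) •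
        ((z.re • Complex.reCLM + z.re • Complex.reCLM) +
         (z.im • Complex.imCLM + z.im • Complex.imCLM)))) z := by
  have hn : Complex.normSq z ≠ 0 := by simpa using hz
  have h1 : HasFDerivAt (fun w : ℂ => Complex.normSq w)
      ((z.re • Complex.reCLM + z.re • Complex.reCLM) +
       (z.im • Complex.imCLM + z.im • Complex.imCLM)) z := by
    have hre := (Complex.reCLM.hasFDerivAt (x := z)).mul (Complex.reCLM.hasFDerivAt (x := z))
    have him := (Complex.imCLM.hasFDerivAt (x := z)).mul (Complex.imCLM.hasFDerivAt (x := z))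
    have := hre.add him
    simp only [Complex.reCLM_apply, Complex.imCLM_apply, smul_eq_mul] at this ⊢
    refine this.congr_of_eventuallyEq (Filter.Eventually.of_forall fun w => ?_)
    simp [Complex.normSq_apply]
  have h2 := (Real.hasDerivAt_sqrt hn).comp_hasFDerivAt z h1
  have h3 := Complex.ofRealCLM.hasFDerivAt.comp z h2
  exact h3

lemma wdz_absC {z : ℂ} (hz : z ≠ 0) :
    wdz (fun w : ℂ => (‖w‖ : ℂ)) z = conj z / (2 * ‖z‖) := by
  unfold wdz
  rw [(hasFDerivAt_absC hz).fderiv]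
  have habs : (‖z‖ : ℝ) ≠ 0 := by simpa using hz
  have hs : Real.sqrt (Complex.normSq z) = ‖z‖ := (Complex.norm_def z).symm
  simp only [ContinuousLinearMap.coe_comp', Function.comp_apply,
    ContinuousLinearMap.coe_smul', Pi.smul_apply, ContinuousLinearMap.add_apply,
    ContinuousLinearMap.coe_smul, ContinuousLinearMap.smul_apply,
    Complex.reCLM_apply, Complex.imCLM_apply, Complex.ofRealCLM_apply,
    Complex.one_re, Complex.one_im, Complex.I_re, Complex.I_im, smul_eq_mul, hs]
  have hconj : (starRingEnd ℂ) z = (z.re : ℂ) - (z.im : ℂ) * Complex.I := by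
    simp [Complex.ext_iff]
  rw [hconj]
  push_cast
  field_simp
  ring


lemma wdz_sub {f g : ℂ → ℂ} {z : ℂ} (hf : DifferentiableAt ℝ f z)
    (hg : DifferentiableAt ℝ g z) :
    wdz (fun w => f w - g w) z = wdz f z - wdz g z := by
  unfold wdz
  rw [fderiv_fun_sub hf hg]
  simp only [ContinuousLinearMap.sub_apply]
  ring

lemma wdz_ainv {w : ℂ} (hw : w ≠ 0) :
    wdz (fun u : ℂ => ((‖u‖ : ℂ))⁻¹) w = -(1 / (2 * w)) * (‖w‖ : ℂ)⁻¹ := by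
  have hB : (‖w‖ : ℂ) ≠ 0 := by
    simp [hw]
  have h := wdz_comp_outer (g := fun x : ℂ => x⁻¹) (f := fun u : ℂ => (‖u‖ : ℂ))
    (hasDerivAt_inv hB) (hasFDerivAt_absC hw).differentiableAt
  rw [h, wdz_absC hw]
  have hsq : (‖w‖ : ℂ) ^ 2 = w * conj w := by
    rw [Complex.mul_conj]
    norm_cast
    exact Complex.sq_norm w
  have hcw : conj w ≠ 0 := by simpa using hw
  field_simp
  linear_combination hsq

lemma key_alg (εI b0 b1 b2 z u : ℂ) (hzu : z * u = 1) (hsq : εI ^ 2 = -1) :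
    z * ((εI - u / 2) * ((εI * z - 1 / 2) * b0 - u * b1) +
        (εI * b0 + (εI * z - 1 / 2) * (-(u ^ 2) * b1) -
          (-(u ^ 2) * b1 + u * (-(u ^ 2) * b2)))) + z ^ 2 * b0
    = 1 / 4 * b0 + 2 * (u - εI) * b1 + u ^ 2 * b2 := by
  linear_combination (-εI*b1 - εI*z*b0/2 + b0/4 + 2*u*b1 - εI*b1*(z*u+1) + u^2*b2) * hzu
    + (z^2*b0) * hsq

lemma final_algebra (εI E1 E2 B b0 b1 b2 z : ℂ) (hz : z ≠ 0) (hB : B ≠ 0)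
    (hsq : εI ^ 2 = -1) :
    z * (E1 * E2 * B⁻¹ * (εI - 1 / (2 * z)) * ((εI * z - 1 / 2) * b0 - z⁻¹ * b1) +
        E1 * E2 * B⁻¹ * (εI * b0 + (εI * z - 1 / 2) * (-(z ^ 2)⁻¹ * b1) -
          (-(z ^ 2)⁻¹ * b1 + z⁻¹ * (-(z ^ 2)⁻¹ * b2)))) +
      z ^ 2 * (E1 * E2 * B⁻¹ * b0) =
    E1 * E2 / B * (1 / 4 * b0 + 2 * (1 / z - εI) * b1 + 1 / z ^ 2 * b2) := by
  have key := key_alg εI b0 b1 b2 z z⁻¹ (mul_inv_cancel₀ hz) hsq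
  linear_combination (E1 * E2 * B⁻¹) * key

end Toolkit

/-- for smooth `H` and `ε = ±1`, on `ℂ \ {0}`,
`∇[e(ε(z+z̄)/2π)|z|⁻¹H(1/z)]
  = e(ε(z+z̄)/2π)|z|⁻¹ ((1/4)H(1/z) + 2(1/z − εi)H¹(1/z) + z⁻²H²(1/z))`. -/
theorem nabla_formula (H : ℂ → ℂ) (hH : ContDiff ℝ (⊤ : ℕ∞) H)
    (ε : ℂ) (hε : ε = 1 ∨ ε = -1) (z : ℂ) (hz : z ≠ 0) :
    nabla (fun w : ℂ =>
        Complex.exp (ε * Complex.I * (w + conj w)) / (‖w‖ : ℂ) * H w⁻¹) z =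
      Complex.exp (ε * Complex.I * (z + conj z)) / (‖z‖ : ℂ) *
        ((1 / 4) * H z⁻¹ + 2 * (1 / z - ε * Complex.I) * wdz H z⁻¹ +
          1 / z ^ 2 * wdz (wdz H) z⁻¹) := by
  classical
  set H1 : ℂ → ℂ := wdz H with hH1def
  have hH1 : ContDiff ℝ (⊤ : ℕ∞) H1 := contDiff_wdz hH
  set P : ℂ → ℂ := fun w => Complex.exp (ε * Complex.I * w) *
      Complex.exp (ε * Complex.I * conj w) * (‖w‖ : ℂ)⁻¹ with hPdef
  have hfeq : (fun w : ℂ =>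
      Complex.exp (ε * Complex.I * (w + conj w)) / (‖w‖ : ℂ) * H w⁻¹)
      = fun w => P w * H w⁻¹ := by
    funext w
    rw [hPdef]
    rw [show ε * Complex.I * (w + conj w)
        = ε * Complex.I * w + ε * Complex.I * conj w by ring, Complex.exp_add]
    ring
  rw [hfeq]
  -- basic derivative facts
  have hder_e1 : ∀ w : ℂ, HasDerivAt (fun u : ℂ => Complex.exp (ε * Complex.I * u))
      (ε * Complex.I * Complex.exp (ε * Complex.I * w)) w := by
    intro w
    have h1 : HasDerivAt (fun u : ℂ => ε * Complex.I * u) (ε * Complex.I) w := by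
      simpa using (hasDerivAt_id w).const_mul (ε * Complex.I)
    have h2 := (Complex.hasDerivAt_exp (ε * Complex.I * w)).comp w h1
    rw [Function.comp_def] at h2
    exact h2.congr_deriv (by ring)
  have hd_e1 : ∀ w : ℂ, DifferentiableAt ℝ (fun u : ℂ => Complex.exp (ε * Complex.I * u)) w :=
    fun w => ((hder_e1 w).differentiableAt).restrictScalars ℝ
  have hd_conj : ∀ w : ℂ, DifferentiableAt ℝ (fun u : ℂ => conj u) w := fun w =>
    Complex.conjCLE.toContinuousLinearMap.differentiableAt
  have hd_e2 : ∀ w : ℂ, DifferentiableAt ℝ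
      (fun u : ℂ => Complex.exp (ε * Complex.I * conj u)) w := by
    intro w
    exact (hd_e1 (conj w)).comp w (hd_conj w)
  have hd_a : ∀ w : ℂ, w ≠ 0 → DifferentiableAt ℝ (fun u : ℂ => (‖u‖ : ℂ)⁻¹) w := by
    intro w hw
    have hB : (‖w‖ : ℂ) ≠ 0 := by simp [hw]
    exact (((hasDerivAt_inv hB).differentiableAt).restrictScalars ℝ).comp w
      (hasFDerivAt_absC hw).differentiableAt
  have hd_P : ∀ w : ℂ, w ≠ 0 → DifferentiableAt ℝ P w := by
    intro w hw
    exact ((hd_e1 w).mul (hd_e2 w)).mul (hd_a w hw)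
  have hd_inv : ∀ w : ℂ, w ≠ 0 → DifferentiableAt ℝ (fun u : ℂ => u⁻¹) w := fun w hw =>
    ((hasDerivAt_inv hw).differentiableAt).restrictScalars ℝ
  have hd_h0 : ∀ w : ℂ, w ≠ 0 → DifferentiableAt ℝ (fun u : ℂ => H u⁻¹) w := by
    intro w hw
    exact ((hH.differentiable (by simp)).differentiableAt).comp w (hd_inv w hw)
  have hd_h1 : ∀ w : ℂ, w ≠ 0 → DifferentiableAt ℝ (fun u : ℂ => H1 u⁻¹) w := by
    intro w hw
    exact ((hH1.differentiable (by simp)).differentiableAt).comp w (hd_inv w hw)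
  -- wdz values
  have hw_e1 : ∀ w : ℂ, wdz (fun u : ℂ => Complex.exp (ε * Complex.I * u)) w
      = ε * Complex.I * Complex.exp (ε * Complex.I * w) := fun w => wdz_holo (hder_e1 w)
  have hw_e2 : ∀ w : ℂ, wdz (fun u : ℂ => Complex.exp (ε * Complex.I * conj u)) w = 0 :=
    fun w => wdz_antiholo (hder_e1 (conj w))
  have hw_h0 : ∀ w : ℂ, w ≠ 0 → wdz (fun u : ℂ => H u⁻¹) w = -(w ^ 2)⁻¹ * wdz H w⁻¹ := by
    intro w hw
    exact wdz_comp_inner ((hH.differentiable (by simp)).differentiableAt) (hasDerivAt_inv hw)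
  have hw_h1 : ∀ w : ℂ, w ≠ 0 → wdz (fun u : ℂ => H1 u⁻¹) w = -(w ^ 2)⁻¹ * wdz H1 w⁻¹ := by
    intro w hw
    exact wdz_comp_inner ((hH1.differentiable (by simp)).differentiableAt) (hasDerivAt_inv hw)
  have hw_P : ∀ w : ℂ, w ≠ 0 → wdz P w = P w * (ε * Complex.I - 1 / (2 * w)) := by
    intro w hw
    rw [hPdef]
    rw [wdz_mul ((hd_e1 w).fun_mul (hd_e2 w)) (hd_a w hw), wdz_mul (hd_e1 w) (hd_e2 w),
      hw_e1 w, hw_e2 w, wdz_ainv hw]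
    ring
  -- first derivative formula
  have step1 : ∀ w : ℂ, w ≠ 0 → wdz (fun u : ℂ => P u * H u⁻¹) w
      = P w * ((ε * Complex.I - 1 / (2 * w)) * H w⁻¹ - (w ^ 2)⁻¹ * H1 w⁻¹) := by
    intro w hw
    rw [wdz_mul (hd_P w hw) (hd_h0 w hw), hw_P w hw, hw_h0 w hw, ← hH1def]
    ring
  -- pass to a clean representative near z
  have hev : (fun w : ℂ => w * wdz (fun u : ℂ => P u * H u⁻¹) w) =ᶠ[nhds z]
      (fun w : ℂ => P w * ((ε * Complex.I * w - 1 / 2) * H w⁻¹ - w⁻¹ * H1 w⁻¹)) := by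
    filter_upwards [compl_singleton_mem_nhds hz] with w hw
    have hw' : w ≠ 0 := hw
    rw [step1 w hw']
    field_simp
  unfold nabla
  beta_reduce
  rw [wdz_congr hev]
  -- second derivative
  have hd_lin : DifferentiableAt ℝ (fun w : ℂ => ε * Complex.I * w - 1 / 2) z := by
    have : HasDerivAt (fun w : ℂ => ε * Complex.I * w - 1 / 2) (ε * Complex.I) z := by
      simpa using ((hasDerivAt_id z).const_mul (ε * Complex.I)).sub_const (1 / 2)
    exact this.differentiableAt.restrictScalars ℝ
  have hw_lin : wdz (fun w : ℂ => ε * Complex.I * w - 1 / 2) z = ε * Complex.I := by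
    apply wdz_holo
    simpa using ((hasDerivAt_id z).const_mul (ε * Complex.I)).sub_const (1 / 2)
  have hw_inv : wdz (fun u : ℂ => u⁻¹) z = -(z ^ 2)⁻¹ := wdz_holo (hasDerivAt_inv hz)
  rw [wdz_mul (hd_P z hz)
    ((hd_lin.fun_mul (hd_h0 z hz)).fun_sub ((hd_inv z hz).fun_mul (hd_h1 z hz)))]
  rw [wdz_sub (hd_lin.fun_mul (hd_h0 z hz)) ((hd_inv z hz).fun_mul (hd_h1 z hz))]
  rw [wdz_mul hd_lin (hd_h0 z hz), wdz_mul (hd_inv z hz) (hd_h1 z hz)]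
  rw [hw_lin, hw_inv, hw_h0 z hz, hw_h1 z hz, hw_P z hz, ← hH1def]
  -- final algebra
  have hPz : P z = Complex.exp (ε * Complex.I * z) *
      Complex.exp (ε * Complex.I * conj z) * (‖z‖ : ℂ)⁻¹ := rfl
  rw [show ε * Complex.I * (z + conj z)
      = ε * Complex.I * z + ε * Complex.I * conj z by ring, Complex.exp_add, hPz]
  have hB : (‖z‖ : ℂ) ≠ 0 := by simp [hz]
  set E1 := Complex.exp (ε * Complex.I * z) with hE1
  set E2 := Complex.exp (ε * Complex.I * conj z) with hE2
  set B := (‖z‖ : ℂ) with hBdef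
  set b0 := H z⁻¹ with hb0
  set b1 := H1 z⁻¹ with hb1
  set b2 := wdz H1 z⁻¹ with hb2
  have hsq : (ε * Complex.I) ^ 2 = -1 := by
    rcases hε with rfl | rfl <;> simp [mul_pow, Complex.I_sq]
  linear_combination final_algebra (ε * Complex.I) E1 E2 B b0 b1 b2 z hz hB hsq
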